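/- Define f₁, f₂ : ℂ³ → ℂ by f₁(z₁,z₂,z₃) = (1/6)e^{3z₁−3z₂+3z₃} + (1/6)e^{−3z₁+3z₂−3z₃} + e^{−(2 log(−6)/(πi))(z₂+z₃)} and f₂(z₁,z₂,z₃) = (i/6)e^{−3z₁+3z₂−3z₃} − (i/6)e^{3z₁−3z₂+3z₃} − e^{−(2 log(−6)/(πi))(z₂+z₃)}. Then with a₁ = i, a₂ = −18, a₃ = 3, a₄ = 2, c = (πi, −πi, πi/2), the pair (f₁, f₂) satisfies the system (a₁ ∂f₁/∂z₁)² + (a₂ f₁(z) + a₃ f₂(z+c) + a₄ ∂²f₁/∂z₁²)² = 1 and (a₁ ∂f₂/∂z₁)² + (a₂ f₂(z) + a₃ f₁(z+c) + a₄ ∂²f₂/∂z₁²)² = 1 for all z ∈ ℂ³. -/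

import Mathlib

open Complex

theorem stmt_13
    (f₁ f₂ : ℂ → ℂ → ℂ → ℂ)
    (hf₁ : f₁ = fun z₁ z₂ z₃ =>
      (1 / 6) * Complex.exp (3 * z₁ - 3 * z₂ + 3 * z₃)
      + (1 / 6) * Complex.exp (-3 * z₁ + 3 * z₂ - 3 * z₃)
      + Complex.exp (-(2 * Complex.log (-6) / ((Real.pi : ℂ) * I)) * (z₂ + z₃)))
    (hf₂ : f₂ = fun z₁ z₂ z₃ =>
      (I / 6) * Complex.exp (-3 * z₁ + 3 * z₂ - 3 * z₃)
      - (I / 6) * Complex.exp (3 * z₁ - 3 * z₂ + 3 * z₃)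
      - Complex.exp (-(2 * Complex.log (-6) / ((Real.pi : ℂ) * I)) * (z₂ + z₃))) :
    ∀ z₁ z₂ z₃ : ℂ,
      (I * deriv (fun w => f₁ w z₂ z₃) z₁) ^ 2
        + ((-18 : ℂ) * f₁ z₁ z₂ z₃
            + 3 * f₂ (z₁ + (Real.pi : ℂ) * I) (z₂ - (Real.pi : ℂ) * I) (z₃ + (Real.pi : ℂ) * I / 2)
            + 2 * deriv (deriv (fun w => f₁ w z₂ z₃)) z₁) ^ 2 = 1
      ∧ (I * deriv (fun w => f₂ w z₂ z₃) z₁) ^ 2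
        + ((-18 : ℂ) * f₂ z₁ z₂ z₃
            + 3 * f₁ (z₁ + (Real.pi : ℂ) * I) (z₂ - (Real.pi : ℂ) * I) (z₃ + (Real.pi : ℂ) * I / 2)
            + 2 * deriv (deriv (fun w => f₂ w z₂ z₃)) z₁) ^ 2 = 1 := by
  intro z₁ z₂ z₃
  set P : ℂ := (Real.pi : ℂ) * I with hP
  have hPne : P ≠ 0 := mul_ne_zero (by exact_mod_cast Real.pi_ne_zero) I_ne_zero
  set L : ℂ := Complex.log (-6) with hL
  set C : ℂ := Complex.exp (-(2 * L / P) * (z₂ + z₃)) with hC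
  -- basic derivative facts
  have h1 : ∀ w : ℂ, HasDerivAt (fun w => Complex.exp (3 * w - 3 * z₂ + 3 * z₃))
      (3 * Complex.exp (3 * w - 3 * z₂ + 3 * z₃)) w := by
    intro w
    have h := ((((hasDerivAt_id w).const_mul (3 : ℂ)).sub_const (3 * z₂)).add_const
      (3 * z₃)).cexp
    simpa [mul_comm] using h
  have h2 : ∀ w : ℂ, HasDerivAt (fun w => Complex.exp (-3 * w + 3 * z₂ - 3 * z₃))
      (-3 * Complex.exp (-3 * w + 3 * z₂ - 3 * z₃)) w := by
    intro w
    have h := ((((hasDerivAt_id w).const_mul (-3 : ℂ)).add_const (3 * z₂)).sub_const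
      (3 * z₃)).cexp
    simpa [mul_comm] using h
  -- first derivatives
  have hd1 : ∀ w : ℂ, HasDerivAt (fun w =>
      (1 / 6) * Complex.exp (3 * w - 3 * z₂ + 3 * z₃)
      + (1 / 6) * Complex.exp (-3 * w + 3 * z₂ - 3 * z₃) + C)
      ((1 / 2) * Complex.exp (3 * w - 3 * z₂ + 3 * z₃)
        - (1 / 2) * Complex.exp (-3 * w + 3 * z₂ - 3 * z₃)) w := by
    intro w
    have h := (((h1 w).const_mul ((1 : ℂ) / 6)).add ((h2 w).const_mul ((1 : ℂ) / 6))).add_const C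
    exact h.congr_deriv (by ring)
  have hd2 : ∀ w : ℂ, HasDerivAt (fun w =>
      (I / 6) * Complex.exp (-3 * w + 3 * z₂ - 3 * z₃)
      - (I / 6) * Complex.exp (3 * w - 3 * z₂ + 3 * z₃) - C)
      (-(I / 2) * Complex.exp (-3 * w + 3 * z₂ - 3 * z₃)
        - (I / 2) * Complex.exp (3 * w - 3 * z₂ + 3 * z₃)) w := by
    intro w
    have h := (((h2 w).const_mul (I / 6)).sub ((h1 w).const_mul (I / 6))).sub_const C
    exact h.congr_deriv (by ring)
  -- second derivatives
  have hd1' : ∀ w : ℂ, HasDerivAt (fun w =>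
      (1 / 2) * Complex.exp (3 * w - 3 * z₂ + 3 * z₃)
        - (1 / 2) * Complex.exp (-3 * w + 3 * z₂ - 3 * z₃))
      ((3 / 2) * Complex.exp (3 * w - 3 * z₂ + 3 * z₃)
        + (3 / 2) * Complex.exp (-3 * w + 3 * z₂ - 3 * z₃)) w := by
    intro w
    have h := ((h1 w).const_mul ((1 : ℂ) / 2)).sub ((h2 w).const_mul ((1 : ℂ) / 2))
    exact h.congr_deriv (by ring)
  have hd2' : ∀ w : ℂ, HasDerivAt (fun w =>
      -(I / 2) * Complex.exp (-3 * w + 3 * z₂ - 3 * z₃)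
        - (I / 2) * Complex.exp (3 * w - 3 * z₂ + 3 * z₃))
      ((3 * I / 2) * Complex.exp (-3 * w + 3 * z₂ - 3 * z₃)
        - (3 * I / 2) * Complex.exp (3 * w - 3 * z₂ + 3 * z₃)) w := by
    intro w
    have h := ((h2 w).const_mul (-(I / 2))).sub ((h1 w).const_mul (I / 2))
    exact h.congr_deriv (by ring)
  -- deriv equalities
  have hD1 : deriv (fun w => f₁ w z₂ z₃) = fun w =>
      (1 / 2) * Complex.exp (3 * w - 3 * z₂ + 3 * z₃)
        - (1 / 2) * Complex.exp (-3 * w + 3 * z₂ - 3 * z₃) := by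
    funext w
    rw [hf₁]
    exact (hd1 w).deriv
  have hD2 : deriv (fun w => f₂ w z₂ z₃) = fun w =>
      -(I / 2) * Complex.exp (-3 * w + 3 * z₂ - 3 * z₃)
        - (I / 2) * Complex.exp (3 * w - 3 * z₂ + 3 * z₃) := by
    funext w
    rw [hf₂]
    exact (hd2 w).deriv
  -- special values
  have h6 : Complex.exp L = -6 := Complex.exp_log (by norm_num)
  have hm1 : Complex.exp P = -1 := by rw [hP]; exact Complex.exp_pi_mul_I
  have hi : Complex.exp (P / 2) = I := by
    have h : P / 2 = ((Real.pi / 2 : ℝ) : ℂ) * I := by rw [hP]; push_cast; ring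
    rw [h, Complex.exp_mul_I, ← Complex.ofReal_cos, ← Complex.ofReal_sin,
      Real.cos_pi_div_two, Real.sin_pi_div_two]
    simp
  have hi' : Complex.exp (-(P / 2)) = -I := by
    rw [Complex.exp_neg, hi, Complex.inv_I]
  -- shifted exponentials
  have hA : Complex.exp (3 * (z₁ + P) - 3 * (z₂ - P) + 3 * (z₃ + P / 2))
      = -I * Complex.exp (3 * z₁ - 3 * z₂ + 3 * z₃) := by
    have h : 3 * (z₁ + P) - 3 * (z₂ - P) + 3 * (z₃ + P / 2)
        = (3 * z₁ - 3 * z₂ + 3 * z₃) + P + P + P + P + P + P + P + P + -(P / 2) := by ring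
    rw [h]
    simp only [Complex.exp_add, hm1, hi']
    ring
  have hB : Complex.exp (-3 * (z₁ + P) + 3 * (z₂ - P) - 3 * (z₃ + P / 2))
      = I * Complex.exp (-3 * z₁ + 3 * z₂ - 3 * z₃) := by
    have h : -3 * (z₁ + P) + 3 * (z₂ - P) - 3 * (z₃ + P / 2)
        = (-3 * z₁ + 3 * z₂ - 3 * z₃) + -P + -P + -P + -P + -P + -P + -P + -P + P / 2 := by ring
    have hm1' : Complex.exp (-P) = -1⁻¹ := by rw [Complex.exp_neg, hm1]; ring
    rw [h]
    simp only [Complex.exp_add, hm1', hi]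
    ring
  have hCs : Complex.exp (-(2 * L / P) * ((z₂ - P) + (z₃ + P / 2))) = -6 * C := by
    have h : -(2 * L / P) * ((z₂ - P) + (z₃ + P / 2)) = -(2 * L / P) * (z₂ + z₃) + L := by
      field_simp
      ring
    rw [h, Complex.exp_add, h6, hC]
    ring
  have hxy : Complex.exp (3 * z₁ - 3 * z₂ + 3 * z₃) * Complex.exp (-3 * z₁ + 3 * z₂ - 3 * z₃)
      = 1 := by
    rw [← Complex.exp_add]
    have h : (3 * z₁ - 3 * z₂ + 3 * z₃) + (-3 * z₁ + 3 * z₂ - 3 * z₃) = 0 := by ring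
    rw [h, Complex.exp_zero]
  constructor
  · rw [hD1, (hd1' z₁).deriv, hf₁, hf₂]
    simp only
    rw [hA, hB, hCs]
    linear_combination hxy + (I ^ 2 * (Complex.exp (3 * z₁ - 3 * z₂ + 3 * z₃) + Complex.exp (-3 * z₁ + 3 * z₂ - 3 * z₃)) ^ 2 / 4 + (Complex.exp (3 * z₁ - 3 * z₂ + 3 * z₃) - Complex.exp (-3 * z₁ + 3 * z₂ - 3 * z₃)) ^ 2 / 4 - (Complex.exp (3 * z₁ - 3 * z₂ + 3 * z₃) + Complex.exp (-3 * z₁ + 3 * z₂ - 3 * z₃)) ^ 2 / 4) * Complex.I_sq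
  · rw [hD2, (hd2' z₁).deriv, hf₁, hf₂]
    simp only
    rw [hA, hB, hCs]
    linear_combination hxy + (I ^ 2 * (Complex.exp (3 * z₁ - 3 * z₂ + 3 * z₃) + Complex.exp (-3 * z₁ + 3 * z₂ - 3 * z₃)) ^ 2 / 4 + (Complex.exp (3 * z₁ - 3 * z₂ + 3 * z₃) - Complex.exp (-3 * z₁ + 3 * z₂ - 3 * z₃)) ^ 2 / 4 - (Complex.exp (3 * z₁ - 3 * z₂ + 3 * z₃) + Complex.exp (-3 * z₁ + 3 * z₂ - 3 * z₃)) ^ 2 / 4) * Complex.I_sq
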